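/- Triangle inequality for the Gini seminorm: for all x, y in R^d, ‖x + y‖_G ≤ ‖x‖_G + ‖y‖_G, where ‖u‖_G = Σ_{j=1}^d u_j (R(u_j) - (d+1)/2) and R is the midpoint rank function. -/
import Mathlib

open Finset

/-- Midpoint rank: R(u_j) = #{i : u_i < u_j} + (#{i : u_i = u_j} + 1)/2. -/
noncomputable def midRank {d : ℕ} (u : Fin d → ℝ) (j : Fin d) : ℝ :=
  ((univ.filter (fun i => u i < u j)).card : ℝ) +
  (((univ.filter (fun i => u i = u j)).card : ℝ) + 1) / 2

/-- Gini seminorm. -/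
noncomputable def giniNorm {d : ℕ} (u : Fin d → ℝ) : ℝ :=
  ∑ j, u j * (midRank u j - ((d : ℝ) + 1) / 2)

noncomputable def wt {d : ℕ} (u : Fin d → ℝ) (i j : Fin d) : ℝ :=
  (if u i < u j then (1:ℝ) else 0) + (if u i = u j then (1:ℝ) else 0)/2 - 1/2

lemma midRank_eq {d : ℕ} (u : Fin d → ℝ) (j : Fin d) :
    midRank u j - ((d : ℝ) + 1) / 2 = ∑ i : Fin d, wt u i j := by
  have hA : ∑ i : Fin d, (if u i < u j then (1:ℝ) else 0)
      = ((univ.filter (fun i => u i < u j)).card : ℝ) := by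
    simp [Finset.sum_boole]
  have hB : ∑ i : Fin d, (if u i = u j then (1:ℝ) else 0)
      = ((univ.filter (fun i => u i = u j)).card : ℝ) := by
    simp [Finset.sum_boole]
  have : ∑ i : Fin d, wt u i j
      = (∑ i : Fin d, (if u i < u j then (1:ℝ) else 0))
        + (∑ i : Fin d, (if u i = u j then (1:ℝ) else 0))/2 - (d : ℝ)/2 := by
    simp only [wt, Finset.sum_sub_distrib, Finset.sum_add_distrib, ← Finset.sum_div]
    simp
  rw [this, hA, hB, midRank]
  ring

lemma wt_add {d : ℕ} (u : Fin d → ℝ) (i j : Fin d) :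
    u j * wt u i j + u i * wt u j i = |u i - u j| / 2 := by
  unfold wt
  rcases lt_trichotomy (u i) (u j) with h | h | h
  · rw [abs_of_nonpos (by linarith)]
    simp [h, not_lt.mpr h.le, h.ne, h.ne']
    ring
  · simp [h]
  · rw [abs_of_nonneg (by linarith)]
    simp [h, not_lt.mpr h.le, h.ne, h.ne']
    ring

lemma gini_eq {d : ℕ} (u : Fin d → ℝ) :
    giniNorm u = (1/4) * ∑ i, ∑ j, |u i - u j| := by
  have h2 : 2 * giniNorm u = ∑ j, ∑ i, (u j * wt u i j + u i * wt u j i) := by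
    simp only [Finset.sum_add_distrib]
    rw [Finset.sum_comm (f := fun j i => u i * wt u j i)]
    have : giniNorm u = ∑ j, ∑ i, u j * wt u i j := by
      unfold giniNorm
      refine Finset.sum_congr rfl fun j _ => ?_
      rw [midRank_eq, Finset.mul_sum]
    linarith [this]
  have h3 : 2 * giniNorm u = ∑ j, ∑ i, |u j - u i| / 2 := by
    rw [h2]
    refine Finset.sum_congr rfl fun j _ => Finset.sum_congr rfl fun i _ => ?_
    rw [wt_add, abs_sub_comm]
  have h4 : ∑ j, ∑ i, |u j - u i| / 2 = (1/2) * ∑ i, ∑ j, |u i - u j| := by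
    rw [Finset.mul_sum]
    refine Finset.sum_congr rfl fun j _ => ?_
    rw [Finset.mul_sum]
    exact Finset.sum_congr rfl fun i _ => by ring
  linarith [h3, h4]

/-- Triangle inequality for the Gini seminorm. -/
theorem stmt_7 {d : ℕ} (x y : Fin d → ℝ) :
    giniNorm (x + y) ≤ giniNorm x + giniNorm y := by
  rw [gini_eq, gini_eq, gini_eq, ← mul_add, ← Finset.sum_add_distrib]
  gcongr with i _
  rw [← Finset.sum_add_distrib]
  apply Finset.sum_le_sum
  intro j _
  have h : (x + y) i - (x + y) j = (x i - x j) + (y i - y j) := by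
    simp only [Pi.add_apply]; ring
  rw [h]
  exact abs_add_le _ _
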